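/- Let A be a normal and quasicomplemented distributive nearlattice and F, G α-filters. Then the join of F and G in the lattice of α-filters equals {x ∈ A : ∃ f ∈ F, g ∈ G with x ∈ (f⊤ ∩ g⊤)⊤}. -/
import Mathlib


/-- A distributive nearlattice, presented (following Araújo–Kinyon) as a
join-semilattice with top together with its canonical ternary operation
`m x y z = (x ⊔ z) ⊓_z (y ⊔ z)` (the meet taken in the principal filter `[z)`),
satisfying the Araújo–Kinyon identities.  This is equivalent to: every
principal filter is a bounded distributive lattice. -/
class DNearlattice (A : Type*) extends SemilatticeSup A, OrderTop A where
  m : A → A → A → A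
  sup_eq_m : ∀ x y : A, x ⊔ y = m x x y
  m_ax2 : ∀ x y : A, m x y x = x
  m_ax3 : ∀ u w x y z : A,
    m (m x y z) (m y (m u x z) z) w = m w w (m y (m x u z) z)
  m_ax4 : ∀ w x y z : A,
    m x (m y y z) w = m (m x y w) (m x y w) (m x z w)

variable {A : Type*} [DNearlattice A]

/-- The annihilator `a⊤ = {x | x ⊔ a = ⊤}`. -/
def ann (a : A) : Set A := {x : A | x ⊔ a = ⊤}

/-- The annihilator of a set (filter): `F⊤ = {x | ∀ f ∈ F, x ⊔ f = ⊤}`. -/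
def annF (F : Set A) : Set A := {x : A | ∀ f ∈ F, x ⊔ f = ⊤}

/-- The double annihilator `a⊤⊤`. -/
def dann (a : A) : Set A := annF (ann a)

/-- A filter: contains `⊤`, is upward closed, and is closed under existing
binary meets (greatest lower bounds). -/
def IsFil (F : Set A) : Prop :=
  ⊤ ∈ F ∧ (∀ a b : A, a ≤ b → a ∈ F → b ∈ F) ∧
    (∀ a b c : A, a ∈ F → b ∈ F → IsGLB {a, b} c → c ∈ F)

/-- The filter generated by a set: the intersection of all filters containing it. -/
def filGen (X : Set A) : Set A := ⋂₀ {F : Set A | IsFil F ∧ X ⊆ F}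

/-- The join of two filters in the lattice of filters. -/
def filJoin (F G : Set A) : Set A := filGen (F ∪ G)

/-- An ideal: downward closed and closed under joins. -/
def IsIdl (I : Set A) : Prop :=
  (∀ a b : A, a ≤ b → b ∈ I → a ∈ I) ∧ (∀ a b : A, a ∈ I → b ∈ I → a ⊔ b ∈ I)

/-- A prime ideal: a nonempty proper ideal such that whenever an existing
meet `a ∧ b` lies in it, `a` or `b` lies in it. -/
def IsPrimeIdl (P : Set A) : Prop :=
  IsIdl P ∧ P.Nonempty ∧ P ≠ Set.univ ∧
    (∀ a b c : A, IsGLB {a, b} c → c ∈ P → a ∈ P ∨ b ∈ P)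

/-- A maximal ideal: a nonempty proper ideal maximal among proper ideals. -/
def IsMaxIdl (I : Set A) : Prop :=
  IsIdl I ∧ I.Nonempty ∧ I ≠ Set.univ ∧
    (∀ J : Set A, IsIdl J → I ⊆ J → J = I ∨ J = Set.univ)

/-- A prime filter: `a ⊔ b ∈ F` implies `a ∈ F` or `b ∈ F`. -/
def IsPrimeFil (F : Set A) : Prop :=
  IsFil F ∧ ∀ a b : A, a ⊔ b ∈ F → a ∈ F ∨ b ∈ F

/-- An α-filter: a filter containing `a⊤⊤` for each of its elements `a`. -/
def IsAlphaFil (F : Set A) : Prop := IsFil F ∧ ∀ a ∈ F, dann a ⊆ F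

/-- An α-ideal: an ideal `I` such that `I ∩ a⊤⊤ ≠ ∅` implies `a ∈ I`. -/
def IsAlphaIdl (I : Set A) : Prop :=
  IsIdl I ∧ ∀ a : A, (I ∩ dann a).Nonempty → a ∈ I

/-- Quasicomplemented: every `a⊤⊤` is of the form `b⊤`. -/
def Quasicomplemented (B : Type*) [DNearlattice B] : Prop :=
  ∀ a : B, ∃ b : B, dann a = ann b

/-- Normal: `(a ⊔ b)⊤ = a⊤ ⋎ b⊤` for all `a, b`. -/
def NormalNL (B : Type*) [DNearlattice B] : Prop :=
  ∀ a b : B, ann (a ⊔ b) = filJoin (ann a) (ann b)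

/-- Stone: `a⊤ ⋎ a⊤⊤ = A` for all `a`. -/
def StoneNL (B : Type*) [DNearlattice B] : Prop :=
  ∀ a : B, filJoin (ann a) (dann a) = Set.univ


section AuxLemmas
open DNearlattice

lemma e1' (x y z u : A) : m y (m x u z) z ≤ m x y z := by
  have h := m_ax3 u (m x y z) x y z
  rw [m_ax2] at h
  rw [← sup_eq_m (m x y z) (m y (m x u z) z)] at h
  exact sup_eq_left.mp h.symm

lemma mcomm (x y z : A) : m x y z = m y x z := by
  have key : ∀ a b c : A, m b a c ≤ m a b c := by
    intro a b c
    have h4 := m_ax4 c b a c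
    rw [← sup_eq_m (m b a c) (m b c c)] at h4
    have h1 : m b (m a a c) c ≤ m a b c := e1' a b c a
    calc m b a c ≤ m b a c ⊔ m b c c := le_sup_left
      _ = m b (m a a c) c := h4.symm
      _ ≤ m a b c := h1
  exact le_antisymm (key y x z) (key x y z)

lemma mbb (x z : A) : m x z z = z := by rw [mcomm, m_ax2]

lemma le_m (x y z : A) : z ≤ m x y z := by
  have h4 := m_ax4 z x y z
  rw [mbb, ← sup_eq_m (m x y z) z] at h4
  have h1 : m x (m y y z) z ≤ m y x z := e1' y x z y
  have h2 : m x y z ⊔ z ≤ m x y z := by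
    rw [← h4]; exact h1.trans_eq (mcomm y x z)
  exact le_sup_right.trans h2

lemma m_le (x y z : A) : m x y z ≤ y ⊔ z := by
  have hyyz : m y (y ⊔ z) z = y ⊔ z := by
    rw [sup_eq_m y z, m_ax4 z y y z, mbb y z, ← sup_eq_m (m y y z) z]
    exact sup_eq_left.mpr (le_m y y z)
  have key := m_ax3 y z (x ⊔ (y ⊔ z)) (x ⊔ (y ⊔ z)) y
  rw [m_ax2, mbb, mbb, ← sup_eq_m (x ⊔ (y ⊔ z)) y, ← sup_eq_m z y] at key
  have hT : (x ⊔ (y ⊔ z)) ⊔ y = x ⊔ (y ⊔ z) :=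
    sup_eq_left.mpr (le_sup_of_le_right le_sup_left)
  rw [hT] at key
  have expand : m (x ⊔ (y ⊔ z)) y z = m x y z ⊔ (y ⊔ z) := by
    rw [mcomm (x ⊔ (y ⊔ z)) y z, sup_eq_m x (y ⊔ z), m_ax4 z y x (y ⊔ z),
        ← sup_eq_m (m y x z) (m y (y ⊔ z) z), hyyz, mcomm y x z]
  rw [expand] at key
  calc m x y z ≤ m x y z ⊔ (y ⊔ z) := le_sup_left
    _ = z ⊔ y := key
    _ = y ⊔ z := sup_comm z y

lemma glb_sup_top {x y c w : A} (h : IsGLB {x, y} c) (hx : x ⊔ w = ⊤)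
    (hy : y ⊔ w = ⊤) : c ⊔ w = ⊤ := by
  have hcx : c ≤ x := h.1 (Set.mem_insert _ _)
  have hcy : c ≤ y := h.1 (Set.mem_insert_of_mem _ rfl)
  have hT : m (x ⊔ w) (y ⊔ w) c = ⊤ := by
    rw [hx, hy, ← sup_eq_m]; exact top_sup_eq c
  have expand : m (x ⊔ w) (y ⊔ w) c
      = (m y x c ⊔ m y w c) ⊔ (m w x c ⊔ (w ⊔ c)) := by
    rw [sup_eq_m y w, m_ax4 c (x ⊔ w) y w,
        ← sup_eq_m (m (x ⊔ w) y c) (m (x ⊔ w) w c),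
        mcomm (x ⊔ w) y c, mcomm (x ⊔ w) w c, sup_eq_m x w,
        m_ax4 c y x w, m_ax4 c w x w,
        ← sup_eq_m (m y x c) (m y w c), ← sup_eq_m (m w x c) (m w w c),
        ← sup_eq_m w c]
  have hmyxc : m y x c ≤ c := by
    apply h.2
    rintro t (rfl | rfl)
    · exact (m_le y t c).trans_eq (sup_eq_left.mpr hcx)
    · exact ((mcomm t x c).trans_le (m_le x t c)).trans_eq (sup_eq_left.mpr hcy)
  have hbound : (m y x c ⊔ m y w c) ⊔ (m w x c ⊔ (w ⊔ c)) ≤ w ⊔ c := by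
    apply sup_le
    · exact sup_le (hmyxc.trans le_sup_right) (m_le y w c)
    · exact sup_le ((mcomm w x c).trans_le (m_le x w c)) le_rfl
  have htop : (⊤ : A) ≤ w ⊔ c := by rw [← hT, expand]; exact hbound
  rw [sup_comm]; exact top_le_iff.mp htop

lemma mem_ann {a t : A} : t ∈ ann a ↔ t ⊔ a = ⊤ := Iff.rfl
lemma mem_annF {X : Set A} {t : A} : t ∈ annF X ↔ ∀ s ∈ X, t ⊔ s = ⊤ := Iff.rfl

lemma ann_mono {a b : A} (h : a ≤ b) : ann a ⊆ ann b := fun t ht => by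
  have h2 : t ⊔ a ≤ t ⊔ b := sup_le_sup_left h t
  rw [mem_ann.mp ht] at h2
  exact top_le_iff.mp h2

lemma annF_anti {X Y : Set A} (h : X ⊆ Y) : annF Y ⊆ annF X :=
  fun t ht s hs => ht s (h hs)

lemma self_mem_dann (a : A) : a ∈ dann a := fun y hy => by
  rw [sup_comm]; exact hy

lemma annF_dann (a : A) : annF (dann a) = ann a := by
  apply Set.Subset.antisymm
  · exact fun x hx => hx a (self_mem_dann a)
  · intro x hx y hy
    rw [sup_comm]; exact hy x hx

lemma dann_sup (a b : A) : dann (a ⊔ b) = dann a ∩ dann b := by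
  apply Set.Subset.antisymm
  · exact fun t ht => ⟨annF_anti (ann_mono le_sup_left) ht,
      annF_anti (ann_mono le_sup_right) ht⟩
  · rintro t ⟨ta, tb⟩ y hy
    have h1 : (y ⊔ a) ∈ ann b := by
      rw [mem_ann, sup_assoc]; exact hy
    have h2 : (t ⊔ y) ∈ ann a := by
      rw [mem_ann, sup_assoc]; exact tb _ h1
    have h4 := ta _ h2
    rwa [← sup_assoc, sup_idem] at h4

lemma filGen_le {X H : Set A} (hH : IsFil H) (hXH : X ⊆ H) : filGen X ⊆ H :=
  fun _x hx => hx H ⟨hH, hXH⟩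

lemma exists_witness (hn : NormalNL A) (hq : Quasicomplemented A) {F : Set A}
    (hF : IsAlphaFil F) {f₁ f₂ : A} (h1 : f₁ ∈ F) (h2 : f₂ ∈ F) :
    ∃ h ∈ F, ann h = ann f₁ ∩ ann f₂ := by
  obtain ⟨f₁', e1⟩ := hq f₁
  obtain ⟨f₂', e2⟩ := hq f₂
  obtain ⟨h, eh⟩ := hq (f₁' ⊔ f₂')
  have a1 : ann f₁ = dann f₁' := by rw [dann, ← e1, annF_dann]
  have a2 : ann f₂ = dann f₂' := by rw [dann, ← e2, annF_dann]
  have hann : ann h = ann f₁ ∩ ann f₂ := by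
    rw [← eh, dann_sup, ← a1, ← a2]
  have hdh : dann h = ann (f₁' ⊔ f₂') := by
    rw [dann, ← eh, annF_dann]
  refine ⟨h, ?_, hann⟩
  have hsub : ann (f₁' ⊔ f₂') ⊆ F := by
    rw [hn f₁' f₂']
    apply filGen_le hF.1
    apply Set.union_subset
    · rw [← e1]; exact hF.2 f₁ h1
    · rw [← e2]; exact hF.2 f₂ h2
  exact hsub (hdh ▸ self_mem_dann h)


end AuxLemmas

/-- In a normal quasicomplemented distributive nearlattice the join of two
α-filters `F, G` in the lattice of α-filters (i.e. the smallest α-filter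
containing both) is `{x | ∃ f ∈ F, g ∈ G, x ∈ (f⊤ ∩ g⊤)⊤}`. -/
theorem stmt8 (hn : NormalNL A) (hq : Quasicomplemented A)
    (F G : Set A) (hF : IsAlphaFil F) (hG : IsAlphaFil G) :
    ⋂₀ {H : Set A | IsAlphaFil H ∧ F ∪ G ⊆ H} =
      {x : A | ∃ f ∈ F, ∃ g ∈ G, x ∈ annF (ann f ∩ ann g)} := by
  have hFS : F ⊆ {x : A | ∃ f ∈ F, ∃ g ∈ G, x ∈ annF (ann f ∩ ann g)} := by
    intro f hf
    exact ⟨f, hf, ⊤, hG.1.1, fun s hs => by rw [sup_comm]; exact hs.1⟩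
  have hGS : G ⊆ {x : A | ∃ f ∈ F, ∃ g ∈ G, x ∈ annF (ann f ∩ ann g)} := by
    intro g hg
    exact ⟨⊤, hF.1.1, g, hg, fun s hs => by rw [sup_comm]; exact hs.2⟩
  apply Set.Subset.antisymm
  · apply Set.sInter_subset_of_mem
    refine ⟨⟨⟨hFS hF.1.1, ?_, ?_⟩, ?_⟩, Set.union_subset hFS hGS⟩
    · -- upward closed
      rintro a b hab ⟨f, hf, g, hg, ha⟩
      refine ⟨f, hf, g, hg, fun s hs => ?_⟩
      have h2 : a ⊔ s ≤ b ⊔ s := sup_le_sup_right hab s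
      rw [ha s hs] at h2
      exact top_le_iff.mp h2
    · -- closed under existing meets
      rintro a b c ⟨f₁, hf₁, g₁, hg₁, ha⟩ ⟨f₂, hf₂, g₂, hg₂, hb⟩ hglb
      obtain ⟨h, hh, hannh⟩ := exists_witness hn hq hF hf₁ hf₂
      obtain ⟨k, hk, hannk⟩ := exists_witness hn hq hG hg₁ hg₂
      refine ⟨h, hh, k, hk, fun s hs => ?_⟩
      have hsf : s ∈ ann f₁ ∩ ann f₂ := hannh ▸ hs.1
      have hsg : s ∈ ann g₁ ∩ ann g₂ := hannk ▸ hs.2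
      exact glb_sup_top hglb (ha s ⟨hsf.1, hsg.1⟩) (hb s ⟨hsf.2, hsg.2⟩)
    · -- alpha
      rintro a ⟨f, hf, g, hg, ha⟩ x hx
      refine ⟨f, hf, g, hg, fun s hs => ?_⟩
      exact hx s (by rw [mem_ann, sup_comm]; exact ha s hs)
  · rintro x ⟨f, hf, g, hg, hx⟩
    rw [Set.mem_sInter]
    rintro H ⟨⟨hHfil, hHa⟩, hFG⟩
    obtain ⟨f₁, e1⟩ := hq f
    obtain ⟨g₁, e2⟩ := hq g
    have a1 : ann f = dann f₁ := by rw [dann, ← e1, annF_dann]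
    have a2 : ann g = dann g₁ := by rw [dann, ← e2, annF_dann]
    have key : ann f ∩ ann g = dann (f₁ ⊔ g₁) := by
      rw [dann_sup, ← a1, ← a2]
    rw [key, annF_dann] at hx
    rw [hn f₁ g₁] at hx
    refine filGen_le hHfil ?_ hx
    apply Set.union_subset
    · rw [← e1]; exact (hHa f (hFG (Set.mem_union_left _ hf)))
    · rw [← e2]; exact (hHa g (hFG (Set.mem_union_right _ hg)))
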